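/- Let $W$ be a wedge with two boundary half-lines from origin $O$, both direction vectors having positive coordinates (clockwise angle $\geq \pi$, so $W$ covers all directions except those strictly between the two boundary rays). Let $L$ be a line through $O$ with slope strictly between the slopes of the two boundary directions. Then for every lattice point $v$ in $W$, the line through $v$ parallel to $L$ intersects at least one of the two boundary half-lines of $W$. -/
import Mathlib


def toR (v : ℤ × ℤ) : ℝ × ℝ := ((v.1 : ℝ), (v.2 : ℝ))

def crossR (u v : ℝ × ℝ) : ℝ := u.1 * v.2 - u.2 * v.1

/-- The closed large wedge, clockwise from the half-line with direction `u₁`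
to the one with direction `u₂`: complement of the open cone strictly
(counterclockwise) between the rays. -/
def largeWedge (O u₁ u₂ : ℝ × ℝ) : Set (ℝ × ℝ) :=
  {p : ℝ × ℝ | 0 ≤ crossR u₁ (p - O) ∨ crossR u₂ (p - O) ≤ 0}

/-- For a large wedge with both boundary directions in the first quadrant and a
line `L` through `O` with slope strictly between the boundary slopes, every
lattice point of the wedge lies on a line parallel to `L` meeting one of the
two boundary half-lines. -/
theorem stmt15 (O : ℝ × ℝ) (a₁ b₁ a₂ b₂ : ℝ)
    (ha₁ : 0 < a₁) (hb₁ : 0 < b₁) (ha₂ : 0 < a₂) (hb₂ : 0 < b₂)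
    (l : ℝ × ℝ) (hl : 0 < l.1)
    (hs₂ : b₂ / a₂ < l.2 / l.1) (hs₁ : l.2 / l.1 < b₁ / a₁) :
    ∀ v : ℤ × ℤ, toR v ∈ largeWedge O (a₁, b₁) (a₂, b₂) →
      (∃ s t : ℝ, 0 ≤ t ∧ toR v + s • l = O + t • (a₁, b₁)) ∨
      (∃ s t : ℝ, 0 ≤ t ∧ toR v + s • l = O + t • (a₂, b₂)) := by
  intro v _
  have hD₁ : 0 < l.1 * b₁ - l.2 * a₁ := by
    have := (div_lt_div_iff₀ hl ha₁).mp hs₁; linarith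
  have hD₂ : l.1 * b₂ - l.2 * a₂ < 0 := by
    have := (div_lt_div_iff₀ ha₂ hl).mp hs₂; linarith
  set c : ℝ := l.1 * ((v.2 : ℝ) - O.2) - l.2 * ((v.1 : ℝ) - O.1) with hc
  rcases le_total 0 c with h | h
  · left
    set t : ℝ := c / (l.1 * b₁ - l.2 * a₁) with ht
    refine ⟨(t * a₁ - ((v.1 : ℝ) - O.1)) / l.1, t, div_nonneg h hD₁.le, ?_⟩
    have hteq : t * (l.1 * b₁ - l.2 * a₁) = c := div_mul_cancel₀ c hD₁.ne'
    refine Prod.ext ?_ ?_ <;>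
      simp only [toR, Prod.fst_add, Prod.snd_add, Prod.smul_mk, smul_eq_mul,
        Prod.smul_fst, Prod.smul_snd]
    · field_simp
      ring
    · field_simp
      nlinarith [hteq, hc]
  · right
    set t : ℝ := c / (l.1 * b₂ - l.2 * a₂) with ht
    refine ⟨(t * a₂ - ((v.1 : ℝ) - O.1)) / l.1, t, by rw [ht, div_nonneg_iff]; exact Or.inr ⟨h, hD₂.le⟩, ?_⟩
    have hteq : t * (l.1 * b₂ - l.2 * a₂) = c := div_mul_cancel₀ c hD₂.ne
    refine Prod.ext ?_ ?_ <;>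
      simp only [toR, Prod.fst_add, Prod.snd_add, Prod.smul_mk, smul_eq_mul,
        Prod.smul_fst, Prod.smul_snd]
    · field_simp
      ring
    · field_simp
      nlinarith [hteq, hc]
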